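/- arXiv:1304.1750 — 2 statements merged into one kernel-verified Lean document; each statement's English description precedes it below -/
import Mathlib

section
/- Let D⁰ denote the standard dyadic intervals of the circle and D^{1/3} their translates by 2π/3. For every arc I ⊆ 𝕋 there exists K in D⁰ ∪ D^{1/3} with I ⊆ K and |K| ≤ 6|I|, where |·| denotes normalized arc length. -/
open Complex Real

/-- The arc of the unit circle with angles in `[a, a + 2πt)`. -/
def circleArc (a t : ℝ) : Set ℂ :=
  {c | ∃ θ : ℝ, a ≤ θ ∧ θ < a + 2 * Real.pi * t ∧ c = Complex.exp (θ * Complex.I)}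

lemma not_three_dvd_pow (j : ℕ) : ¬ (3:ℤ) ∣ 2^j := by
  intro h
  have h2 := Int.Prime.dvd_pow' (p := 3) (by norm_num) h
  norm_num at h2

lemma exists_good_j (t : ℝ) (ht : 0 < t) (ht6 : t ≤ 1/6) :
    ∃ j : ℕ, 3 * t < (2:ℝ) ^ (-(j:ℤ)) ∧ (2:ℝ) ^ (-(j:ℤ)) ≤ 6 * t := by
  classical
  have hex : ∃ n : ℕ, (2:ℝ) ^ (-(n:ℤ)) ≤ 6 * t := by
    obtain ⟨n, hn⟩ := exists_pow_lt_of_lt_one (by linarith : (0:ℝ) < 6*t)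
      (by norm_num : (1/2 : ℝ) < 1)
    refine ⟨n, le_of_lt ?_⟩
    rw [zpow_neg, zpow_natCast]
    calc ((2:ℝ)^n)⁻¹ = (1/2:ℝ)^n := by rw [one_div, inv_pow]
    _ < 6*t := hn
  set j := Nat.find hex with hj
  have hspec : (2:ℝ) ^ (-(j:ℤ)) ≤ 6 * t := Nat.find_spec hex
  refine ⟨j, ?_, hspec⟩
  rcases Nat.eq_zero_or_pos j with h0 | hpos
  · rw [h0]; norm_num; linarith
  · have hmin := Nat.find_min hex (Nat.sub_lt hpos Nat.one_pos)
    push_neg at hmin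
    have : (2:ℝ) ^ (-((j-1 : ℕ):ℤ)) = 2 * (2:ℝ) ^ (-(j:ℤ)) := by
      rw [← zpow_one_add₀ (by norm_num : (2:ℝ) ≠ 0)]
      congr 1
      omega
    rw [this] at hmin
    linarith

lemma assemble (j : ℕ) (β s t : ℝ) (M : ℤ)
    (hsub : ∀ x : ℝ, s ≤ x → x < s + t →
      (M:ℝ) + 2^j * β ≤ 2^j * x ∧ (2:ℝ)^j * x < M + 2^j * β + 1) :
    ∃ m : ℕ, m ≤ 2^j ∧ ∀ x : ℝ, s ≤ x → x < s + t →
      ∃ k : ℤ, (2:ℝ)^(-(j:ℤ)) * m + β + k ≤ x ∧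
        x < (2:ℝ)^(-(j:ℤ)) * m + β + k + (2:ℝ)^(-(j:ℤ)) := by
  have h2j : (0:ℝ) < 2^j := by positivity
  have h2jz : (0:ℤ) < 2^j := by positivity
  have hpow : (2:ℝ) ^ (-(j:ℤ)) = ((2:ℝ)^j)⁻¹ := by rw [zpow_neg, zpow_natCast]
  have hmod_nonneg : 0 ≤ M % (2^j:ℤ) := Int.emod_nonneg M (by positivity)
  have hmod_lt : M % (2^j:ℤ) < 2^j := Int.emod_lt_of_pos M h2jz
  have heq : (2^j:ℤ) * (M / 2^j) + M % 2^j = M := Int.mul_ediv_add_emod M (2^j)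
  refine ⟨(M % (2^j:ℤ)).toNat, ?_, ?_⟩
  · have hc : ((2^j : ℕ):ℤ) = (2:ℤ)^j := by push_cast; ring
    omega
  · intro x hx1 hx2
    obtain ⟨hlo, hhi⟩ := hsub x hx1 hx2
    refine ⟨M / 2^j, ?_, ?_⟩
    all_goals {
      have hmR : (((M % (2^j:ℤ)).toNat : ℕ) : ℝ) = ((M % (2^j:ℤ) : ℤ) : ℝ) := by
        exact_mod_cast Int.toNat_of_nonneg hmod_nonneg
      have hM : ((2:ℝ)^j) * ((M / (2^j:ℤ) : ℤ) : ℝ) + ((M % (2^j:ℤ) : ℤ) : ℝ) = (M:ℝ) := by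
        exact_mod_cast heq
      rw [hpow, hmR]
      rw [show ((M % (2^j:ℤ) : ℤ) : ℝ) = (M:ℝ) - (2:ℝ)^j * ((M / (2^j:ℤ) : ℤ) : ℝ) by linarith]
      have hinv : ((2:ℝ)^j)⁻¹ * (2:ℝ)^j = 1 := inv_mul_cancel₀ (ne_of_gt h2j)
      nlinarith [mul_le_mul_of_nonneg_left hlo (le_of_lt (inv_pos.mpr h2j)),
        mul_lt_mul_of_pos_left hhi (inv_pos.mpr h2j)]
    }

lemma key_lemma (s t : ℝ) (ht : 0 < t) (ht1 : t ≤ 1) :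
    ∃ β ∈ ({0, 1/3} : Set ℝ), ∃ j m : ℕ, m ≤ 2 ^ j ∧ (2:ℝ) ^ (-(j:ℤ)) ≤ 6 * t ∧
      ∀ x : ℝ, s ≤ x → x < s + t →
        ∃ k : ℤ, (2:ℝ) ^ (-(j:ℤ)) * m + β + k ≤ x ∧
          x < (2:ℝ) ^ (-(j:ℤ)) * m + β + k + (2:ℝ) ^ (-(j:ℤ)) := by
  rcases le_or_gt t (1/6) with ht6 | ht6
  · obtain ⟨j, h3, h6⟩ := exists_good_j t ht ht6
    have h2j : (0:ℝ) < 2^j := by positivity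
    have hpow : (2:ℝ) ^ (-(j:ℤ)) = ((2:ℝ)^j)⁻¹ := by rw [zpow_neg, zpow_natCast]
    have hl : 2^j * t < 1/3 := by
      rw [hpow] at h3
      nlinarith [mul_lt_mul_of_pos_left h3 h2j, mul_inv_cancel₀ (ne_of_gt h2j)]
    set y := (2:ℝ)^j * s with hy
    have hl0 : 0 < 2^j * t := by positivity
    set N := ⌊y⌋ with hN
    have hNy : (N:ℝ) ≤ y := Int.floor_le y
    have hyN : y < N + 1 := Int.lt_floor_add_one y
    by_cases hA : y + 2^j * t ≤ N + 1
    · -- grid β = 0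
      refine ⟨0, by simp, j, ?_⟩
      obtain ⟨m, hm, hcov⟩ := assemble j 0 s t N (fun x hx1 hx2 => by
        constructor
        · have : (2:ℝ)^j * s ≤ 2^j * x := by nlinarith
          simpa using le_trans hNy this
        · have : (2:ℝ)^j * x < y + 2^j * t := by rw [hy]; nlinarith
          simp only [mul_zero, add_zero]
          linarith)
      exact ⟨m, hm, h6, hcov⟩
    · -- grid β = 1/3
      push_neg at hA
      set M := ⌊y - 2^j * (1/3 : ℝ)⌋ with hM
      have hMy : (M:ℝ) ≤ y - 2^j * (1/3:ℝ) := Int.floor_le _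
      have hyM : y - 2^j * (1/3:ℝ) < M + 1 := Int.lt_floor_add_one _
      -- no shifted grid point in (N+1-1/3, N+1+1/3); in particular M+1+2^j/3 ≥ N+1+1/3
      have hkey : ((N:ℝ) + 1) + 1/3 ≤ (M:ℝ) + 1 + 2^j * (1/3:ℝ) := by
        by_contra hcon
        push_neg at hcon
        have hlb : ((N:ℝ) + 1) - 1/3 < (M:ℝ) + 1 + 2^j * (1/3:ℝ) := by
          have : y < (M:ℝ) + 1 + 2^j * (1/3:ℝ) := by linarith
          -- y > N+1 - (2^j t) > N+1 - 1/3
          linarith [hA]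
        have hz : (3*(M+1) + 2^j - 3*(N+1) : ℤ) = 0 := by
          have c1 : ((3*(M+1) + 2^j - 3*(N+1) : ℤ) : ℝ) < 1 := by push_cast; linarith
          have c2 : (-1:ℝ) < ((3*(M+1) + 2^j - 3*(N+1) : ℤ) : ℝ) := by push_cast; linarith
          have c1' : (3*(M+1) + 2^j - 3*(N+1) : ℤ) < 1 := by exact_mod_cast c1
          have c2' : (-1:ℤ) < (3*(M+1) + 2^j - 3*(N+1) : ℤ) := by exact_mod_cast c2
          omega
        exact not_three_dvd_pow j ⟨(N+1) - (M+1), by linarith [hz]⟩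
      refine ⟨1/3, by simp, j, ?_⟩
      obtain ⟨m, hm, hcov⟩ := assemble j (1/3) s t M (fun x hx1 hx2 => by
        constructor
        · have : (2:ℝ)^j * s ≤ 2^j * x := by nlinarith
          linarith
        · have h1 : (2:ℝ)^j * x < y + 2^j * t := by rw [hy]; nlinarith
          have h2 : y + 2^j * t < (N:ℝ) + 1 + 1/3 := by linarith
          linarith)
      exact ⟨m, hm, h6, hcov⟩
  · -- t > 1/6 : whole circle, j = 0
    refine ⟨0, by simp, 0, 0, by norm_num, by norm_num; linarith, ?_⟩
    intro x hx1 hx2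
    have hf1 := Int.floor_le x
    have hf2 := Int.lt_floor_add_one x
    refine ⟨⌊x⌋, ?_, ?_⟩
    · norm_num [Int.floor_le]
    · norm_num [Int.lt_floor_add_one]

/-- Every arc of the circle is contained in an interval of one of the two dyadic grids
`𝒟^β`, `β ∈ {0, 1/3}`, of at most `6` times its (normalized) length. -/
theorem arc_subset_dyadic (a t : ℝ) (ht : 0 < t) (ht1 : t ≤ 1) :
    ∃ β ∈ ({0, 1/3} : Set ℝ), ∃ j m : ℕ, m ≤ 2 ^ j ∧
      circleArc a t ⊆
        circleArc (2 ^ (-(j : ℤ)) * (2 * Real.pi) * m + 2 * Real.pi * β) ((2 : ℝ) ^ (-(j : ℤ))) ∧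
      (2 : ℝ) ^ (-(j : ℤ)) ≤ 6 * t := by
  have hπ : (0:ℝ) < 2 * Real.pi := by positivity
  obtain ⟨β, hβ, j, m, hm, h6, hcov⟩ := key_lemma (a / (2 * Real.pi)) t ht ht1
  refine ⟨β, hβ, j, m, hm, ?_, h6⟩
  rintro c ⟨θ, hθ1, hθ2, rfl⟩
  have hx1 : a / (2 * Real.pi) ≤ θ / (2 * Real.pi) := by
    gcongr
  have hx2 : θ / (2 * Real.pi) < a / (2 * Real.pi) + t := by
    rw [div_add' _ _ _ (ne_of_gt hπ)]
    gcongr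
    linarith
  obtain ⟨k, hk1, hk2⟩ := hcov (θ / (2 * Real.pi)) hx1 hx2
  have hdiv : 2 * Real.pi * (θ / (2 * Real.pi)) = θ := by field_simp
  refine ⟨θ - 2 * Real.pi * k, ?_, ?_, ?_⟩
  · have h1 := mul_le_mul_of_nonneg_left hk1 (le_of_lt hπ)
    rw [hdiv] at h1
    nlinarith [h1]
  · have h2 := mul_lt_mul_of_pos_left hk2 hπ
    rw [hdiv] at h2
    nlinarith [h2]
  · rw [Complex.exp_eq_exp_iff_exists_int]
    exact ⟨k, by push_cast; ring⟩
end

section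
/- Let g be an analytic function on the unit disc 𝔻 that is Lipschitz (|g(z) - g(w)| ≤ L|z-w|). Then there is a constant C (depending only on L and |g|) such that for all z ∈ 𝔻, B(|g|²)(z) ≤ C(|g(z)|² + (1-|z|²)² log(2/(1-|z|))), where B is the Berezin transform B(h)(z) = ∫_𝔻 h(ζ)(1-|z|²)²/|1-\bar{ζ}z|⁴ dA(ζ). -/
/-!
Write `D ζ = ‖1 - conj ζ * z‖`. The identity `D² = ‖ζ - z‖² + (1 - ‖ζ‖²)(1 - ‖z‖²)` gives
`‖ζ - z‖ ≤ D`, so the Lipschitz bound yields `‖g ζ‖² ≤ 2‖g z‖² + 2L²D²`, and `B(|g|²)(z)` is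
controlled by `(1 - ‖z‖²)²` times the kernel integrals `∫_𝔻 D⁻⁴ ≲ (1 - ‖z‖)⁻²` and
`∫_𝔻 D⁻² ≲ log (2 / (1 - ‖z‖))`.

For these, rotate `z` to `s = ‖z‖`. If `s < 1/2`, `D ≥ 1 - s` is bounded below. Otherwise enlarge
the disc to the strip `|Re ζ| < 1`, where `‖1 - s ζ‖² = (1 - s x)² + (s y)²`: the `y`-integral
`∫ dy / ((1 - s x)² + (s y)²) = π / (s (1 - s x))` is explicit, and what remains are the elementary
integrals of `(1 - s x)⁻¹` and `(1 - s x)⁻³` over `(-1, 1)`.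
-/

open MeasureTheory Complex Real ComplexConjugate
open scoped ENNReal

theorem sq_norm_one_sub_conj_mul (ζ z : ℂ) :
    ‖1 - conj ζ * z‖ ^ 2 = ‖ζ - z‖ ^ 2 + (1 - ‖ζ‖ ^ 2) * (1 - ‖z‖ ^ 2) := by
  simp only [Complex.sq_norm, normSq_apply, sub_re, sub_im, one_re, one_im, mul_re, mul_im,
    conj_re, conj_im]
  ring

theorem norm_sub_le_norm_one_sub_conj_mul {ζ z : ℂ} (hζ : ‖ζ‖ ≤ 1) (hz : ‖z‖ ≤ 1) :
    ‖ζ - z‖ ≤ ‖1 - conj ζ * z‖ := by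
  have hζ' : ‖ζ‖ ^ 2 ≤ 1 := pow_le_one₀ (norm_nonneg ζ) hζ
  have hz' : ‖z‖ ^ 2 ≤ 1 := pow_le_one₀ (norm_nonneg z) hz
  refine (pow_le_pow_iff_left₀ (norm_nonneg _) (norm_nonneg _) two_ne_zero).mp ?_
  rw [sq_norm_one_sub_conj_mul]
  exact le_add_of_nonneg_right (mul_nonneg (by linarith) (by linarith))

theorem one_sub_norm_le_norm_one_sub_conj_mul {ζ : ℂ} (hζ : ‖ζ‖ ≤ 1) (z : ℂ) :
    1 - ‖z‖ ≤ ‖1 - conj ζ * z‖ := by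
  have : ‖conj ζ * z‖ ≤ ‖z‖ := by
    rw [norm_mul, norm_conj]; exact mul_le_of_le_one_left (norm_nonneg z) hζ
  linarith [norm_sub_norm_le (1 : ℂ) (conj ζ * z), norm_one (α := ℂ)]

theorem setLIntegral_ball_comp_conj_mul (f : ℂ → ℝ≥0∞) (z : ℂ) :
    ∫⁻ ζ in Metric.ball (0 : ℂ) 1, f (conj ζ * z) = ∫⁻ ζ in Metric.ball (0 : ℂ) 1, f (‖z‖ * ζ) := by
  let e : ℂ ≃ₗᵢ[ℝ] ℂ := conjLIE.trans (rotation (Circle.exp (arg z)))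
  have he : ∀ ζ, conj ζ * z = ‖z‖ * e ζ := fun ζ => by
    have : e ζ = exp (arg z * I) * conj ζ := rfl
    rw [this]
    nth_rewrite 1 [← norm_mul_exp_arg_mul_I z]
    ring
  simp_rw [he]
  have := e.measurePreserving.setLIntegral_comp_preimage_emb
    e.toHomeomorph.measurableEmbedding (fun w => f (‖z‖ * w)) (Metric.ball (0 : ℂ) 1)
  rwa [LinearIsometryEquiv.preimage_ball, map_zero] at this

theorem setLIntegral_ball_le_strip (f : ℂ → ℝ≥0∞) :
    ∫⁻ ζ in Metric.ball (0 : ℂ) 1, f ζ ≤ ∫⁻ x in Set.Ioo (-1 : ℝ) 1, ∫⁻ y : ℝ, f (x + y * I) := by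
  have hsub : Metric.ball (0 : ℂ) 1 ⊆
      measurableEquivRealProd ⁻¹' (Set.Ioo (-1 : ℝ) 1 ×ˢ Set.univ) :=
    fun ζ hζ => ⟨abs_lt.mp ((abs_re_le_norm ζ).trans_lt (mem_ball_zero_iff.mp hζ)), trivial⟩
  calc ∫⁻ ζ in Metric.ball (0 : ℂ) 1, f ζ
      ≤ ∫⁻ ζ in measurableEquivRealProd ⁻¹' (Set.Ioo (-1 : ℝ) 1 ×ˢ Set.univ), f ζ :=
        lintegral_mono_set hsub
    _ = ∫⁻ p : ℝ × ℝ in Set.Ioo (-1 : ℝ) 1 ×ˢ Set.univ, f (p.1 + p.2 * I) := by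
        rw [← volume_preserving_equiv_real_prod.setLIntegral_comp_preimage_emb
          measurableEquivRealProd.measurableEmbedding]
        simp [re_add_im]
    _ ≤ _ := by
        rw [Measure.volume_eq_prod, ← Measure.prod_restrict, Measure.restrict_univ]
        exact lintegral_prod_le _

theorem integral_le_toReal_lintegral_ofReal {α : Type*} [MeasurableSpace α] {μ : Measure α}
    {f : α → ℝ} (hf : 0 ≤ f) : ∫ a, f a ∂μ ≤ (∫⁻ a, ENNReal.ofReal (f a) ∂μ).toReal := by
  simpa only [Real.norm_of_nonneg (hf _)] using
    (le_abs_self _).trans (norm_integral_le_lintegral_norm f)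

theorem lintegral_inv_sq_add_mul_sq {a b : ℝ} (ha : 0 < a) (hb : 0 < b) :
    ∫⁻ y : ℝ, ENNReal.ofReal ((a ^ 2 + (b * y) ^ 2)⁻¹) = ENNReal.ofReal (π / (a * b)) := by
  have hrw : (fun y : ℝ => (a ^ 2 + (b * y) ^ 2)⁻¹)
      = fun y => (a ^ 2)⁻¹ * (1 + (b / a * y) ^ 2)⁻¹ := by
    funext y; field_simp
  have hint : Integrable (fun y : ℝ => (a ^ 2 + (b * y) ^ 2)⁻¹) := by
    rw [hrw]
    exact (integrable_inv_one_add_sq.comp_mul_left' (by positivity)).const_mul _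
  rw [← ofReal_integral_eq_lintegral_ofReal hint (.of_forall fun y => by positivity), hrw,
    integral_const_mul, Measure.integral_comp_mul_left (fun t => (1 + t ^ 2)⁻¹),
    integral_univ_inv_one_add_sq, abs_of_pos (by positivity), smul_eq_mul]
  congr 1
  field_simp

theorem integral_inv_pow_three_of_pos {a b : ℝ} (ha : 0 < a) (hb : 0 < b) :
    ∫ t in a..b, (t ^ 3)⁻¹ = ((a ^ 2)⁻¹ - (b ^ 2)⁻¹) / 2 := by
  have hzpow : ∀ t : ℝ, (t ^ 3)⁻¹ = t ^ (-3 : ℤ) := fun t => by rw [zpow_neg, zpow_ofNat]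
  simp_rw [hzpow]
  rw [integral_zpow (Or.inr ⟨by norm_num, Set.notMem_uIcc_of_lt ha hb⟩),
    show (-3 : ℤ) + 1 = -2 by norm_num, zpow_neg, zpow_neg, zpow_ofNat, zpow_ofNat]
  push_cast
  ring

theorem setLIntegral_Ioo_inv_one_sub_mul_pow (k : ℕ) {s : ℝ} (hs0 : 0 < s) (hs1 : s < 1) :
    ∫⁻ x in Set.Ioo (-1 : ℝ) 1, ENNReal.ofReal (((1 - s * x) ^ k)⁻¹)
      = ENNReal.ofReal (s⁻¹ * ∫ t in (1 - s)..(1 + s), (t ^ k)⁻¹) := by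
  have hpos : ∀ x ∈ Set.Icc (-1 : ℝ) 1, 0 < 1 - s * x := fun x hx => by
    nlinarith [hx.1, hx.2]
  have hint : IntegrableOn (fun x : ℝ => ((1 - s * x) ^ k)⁻¹) (Set.Ioo (-1) 1) :=
    (ContinuousOn.integrableOn_Icc (ContinuousOn.inv₀ (by fun_prop)
      fun x hx => (pow_pos (hpos x hx) k).ne')).mono_set Set.Ioo_subset_Icc_self
  rw [← ofReal_integral_eq_lintegral_ofReal hint ((ae_restrict_iff' measurableSet_Ioo).2
      (.of_forall fun x hx => (inv_pos.2 (pow_pos (hpos x (Set.Ioo_subset_Icc_self hx)) k)).le)),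
    ← integral_Ioc_eq_integral_Ioo, ← intervalIntegral.integral_of_le (by norm_num),
    intervalIntegral.integral_comp_sub_mul (fun t => (t ^ k)⁻¹) hs0.ne']
  norm_num [sub_neg_eq_add]

theorem sq_norm_one_sub_ofReal_mul (s x y : ℝ) :
    ‖1 - s * (x + y * I)‖ ^ 2 = (1 - s * x) ^ 2 + (s * y) ^ 2 := by
  simp only [Complex.sq_norm, normSq_apply, sub_re, sub_im, one_re, one_im, mul_re, mul_im,
    ofReal_re, ofReal_im, add_re, add_im, I_re, I_im]
  ring

theorem lintegral_inv_sq_norm_one_sub_ofReal_mul {s x : ℝ} (hs : 0 < s) (hx : 0 < 1 - s * x) :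
    ∫⁻ y : ℝ, ENNReal.ofReal ((‖1 - s * (x + y * I)‖ ^ 2)⁻¹)
      = ENNReal.ofReal (π / s) * ENNReal.ofReal (1 - s * x)⁻¹ := by
  simp_rw [sq_norm_one_sub_ofReal_mul]
  rw [lintegral_inv_sq_add_mul_sq hx hs, ← ENNReal.ofReal_mul (by positivity)]
  congr 1
  field_simp

theorem lintegral_inv_pow_four_norm_one_sub_ofReal_mul_le {s x : ℝ} (hs : 0 < s)
    (hx : 0 < 1 - s * x) :
    ∫⁻ y : ℝ, ENNReal.ofReal ((‖1 - s * (x + y * I)‖ ^ 4)⁻¹)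
      ≤ ENNReal.ofReal (π / s) * ENNReal.ofReal ((1 - s * x) ^ 3)⁻¹ := by
  have hle : ∀ y : ℝ, (‖1 - s * (x + y * I)‖ ^ 4)⁻¹
      ≤ ((1 - s * x) ^ 2)⁻¹ * ((1 - s * x) ^ 2 + (s * y) ^ 2)⁻¹ := fun y => by
    rw [show ‖1 - s * (x + y * I)‖ ^ 4 = (‖1 - s * (x + y * I)‖ ^ 2) ^ 2 by ring,
      sq_norm_one_sub_ofReal_mul, sq, mul_inv]
    gcongr
    exact le_add_of_nonneg_right (sq_nonneg _)
  calc ∫⁻ y : ℝ, ENNReal.ofReal ((‖1 - s * (x + y * I)‖ ^ 4)⁻¹)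
      ≤ ∫⁻ y : ℝ, ENNReal.ofReal ((1 - s * x) ^ 2)⁻¹
          * ENNReal.ofReal ((1 - s * x) ^ 2 + (s * y) ^ 2)⁻¹ :=
        lintegral_mono fun y => by
          rw [← ENNReal.ofReal_mul (by positivity)]; exact ENNReal.ofReal_le_ofReal (hle y)
    _ = ENNReal.ofReal (π / s) * ENNReal.ofReal ((1 - s * x) ^ 3)⁻¹ := by
        rw [lintegral_const_mul' _ _ ENNReal.ofReal_ne_top, lintegral_inv_sq_add_mul_sq hx hs,
          ← ENNReal.ofReal_mul (by positivity), ← ENNReal.ofReal_mul (by positivity)]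
        congr 1
        field_simp

theorem setLIntegral_ball_inv_sq_norm_one_sub_ofReal_mul_le {s : ℝ} (hs : 1 / 2 ≤ s)
    (hs1 : s < 1) :
    ∫⁻ ζ in Metric.ball (0 : ℂ) 1, ENNReal.ofReal ((‖1 - s * ζ‖ ^ 2)⁻¹)
      ≤ ENNReal.ofReal (4 * π * Real.log (2 / (1 - s))) := by
  have hs0 : 0 < s := by linarith
  calc ∫⁻ ζ in Metric.ball (0 : ℂ) 1, ENNReal.ofReal ((‖1 - s * ζ‖ ^ 2)⁻¹)
      ≤ ∫⁻ x in Set.Ioo (-1 : ℝ) 1, ∫⁻ y : ℝ,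
          ENNReal.ofReal ((‖1 - s * (x + y * I)‖ ^ 2)⁻¹) :=
        setLIntegral_ball_le_strip _
    _ = ∫⁻ x in Set.Ioo (-1 : ℝ) 1,
          ENNReal.ofReal (π / s) * ENNReal.ofReal ((1 - s * x) ^ 1)⁻¹ :=
        setLIntegral_congr_fun measurableSet_Ioo fun x hx => by
          rw [lintegral_inv_sq_norm_one_sub_ofReal_mul hs0 (by nlinarith [hx.1, hx.2]), pow_one]
    _ = ENNReal.ofReal (π / s * (s⁻¹ * Real.log ((1 + s) / (1 - s)))) := by
        rw [lintegral_const_mul' _ _ ENNReal.ofReal_ne_top,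
          setLIntegral_Ioo_inv_one_sub_mul_pow 1 hs0 hs1, ← ENNReal.ofReal_mul (by positivity)]
        simp only [pow_one, integral_inv_of_pos (by linarith : 0 < 1 - s) (by linarith : 0 < 1 + s)]
    _ ≤ ENNReal.ofReal (4 * π * Real.log (2 / (1 - s))) := by
        refine ENNReal.ofReal_le_ofReal ?_
        have hlog : Real.log ((1 + s) / (1 - s)) ≤ Real.log (2 / (1 - s)) :=
          log_le_log (by apply div_pos <;> linarith) (by gcongr; linarith)
        have hlog0 : 0 ≤ Real.log ((1 + s) / (1 - s)) :=
          log_nonneg ((one_le_div (by linarith)).2 (by linarith))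
        have hinv : s⁻¹ ≤ 2 := by rw [inv_le_comm₀ hs0 two_pos]; linarith
        calc π / s * (s⁻¹ * Real.log ((1 + s) / (1 - s)))
            = π * (s⁻¹ * s⁻¹) * Real.log ((1 + s) / (1 - s)) := by ring
          _ ≤ π * (2 * 2) * Real.log (2 / (1 - s)) := by gcongr
          _ = 4 * π * Real.log (2 / (1 - s)) := by ring

theorem setLIntegral_ball_inv_pow_four_norm_one_sub_ofReal_mul_le {s : ℝ} (hs : 1 / 2 ≤ s)
    (hs1 : s < 1) :
    ∫⁻ ζ in Metric.ball (0 : ℂ) 1, ENNReal.ofReal ((‖1 - s * ζ‖ ^ 4)⁻¹)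
      ≤ ENNReal.ofReal (2 * π / (1 - s) ^ 2) := by
  have hs0 : 0 < s := by linarith
  calc ∫⁻ ζ in Metric.ball (0 : ℂ) 1, ENNReal.ofReal ((‖1 - s * ζ‖ ^ 4)⁻¹)
      ≤ ∫⁻ x in Set.Ioo (-1 : ℝ) 1, ∫⁻ y : ℝ,
          ENNReal.ofReal ((‖1 - s * (x + y * I)‖ ^ 4)⁻¹) :=
        setLIntegral_ball_le_strip _
    _ ≤ ∫⁻ x in Set.Ioo (-1 : ℝ) 1,
          ENNReal.ofReal (π / s) * ENNReal.ofReal ((1 - s * x) ^ 3)⁻¹ :=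
        setLIntegral_mono' measurableSet_Ioo fun x hx =>
          lintegral_inv_pow_four_norm_one_sub_ofReal_mul_le hs0 (by nlinarith [hx.1, hx.2])
    _ = ENNReal.ofReal (π / s * (s⁻¹ * ((((1 - s) ^ 2)⁻¹ - ((1 + s) ^ 2)⁻¹) / 2))) := by
        rw [lintegral_const_mul' _ _ ENNReal.ofReal_ne_top,
          setLIntegral_Ioo_inv_one_sub_mul_pow 3 hs0 hs1, ← ENNReal.ofReal_mul (by positivity),
          integral_inv_pow_three_of_pos (by linarith) (by linarith)]
    _ ≤ ENNReal.ofReal (2 * π / (1 - s) ^ 2) := by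
        refine ENNReal.ofReal_le_ofReal ?_
        have hinv : s⁻¹ ≤ 2 := by rw [inv_le_comm₀ hs0 two_pos]; linarith
        have hdiff : ((1 - s) ^ 2)⁻¹ - ((1 + s) ^ 2)⁻¹ ≤ ((1 - s) ^ 2)⁻¹ :=
          sub_le_self _ (by positivity)
        have hdiff0 : 0 ≤ ((1 - s) ^ 2)⁻¹ - ((1 + s) ^ 2)⁻¹ :=
          sub_nonneg.2 (by gcongr; linarith)
        calc π / s * (s⁻¹ * ((((1 - s) ^ 2)⁻¹ - ((1 + s) ^ 2)⁻¹) / 2))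
            = π * (s⁻¹ * s⁻¹) * ((((1 - s) ^ 2)⁻¹ - ((1 + s) ^ 2)⁻¹) / 2) := by ring
          _ ≤ π * (2 * 2) * (((1 - s) ^ 2)⁻¹ / 2) := by gcongr
          _ = 2 * π / (1 - s) ^ 2 := by ring

theorem log_two_le_log_two_div_one_sub {r : ℝ} (h0 : 0 ≤ r) (h1 : r < 1) :
    Real.log 2 ≤ Real.log (2 / (1 - r)) :=
  log_le_log two_pos (le_div_self two_pos.le (by linarith) (by linarith))

theorem setLIntegral_ball_inv_pow_norm_one_sub_conj_mul_le_pi_div (k : ℕ) {z : ℂ} (hz : ‖z‖ < 1) :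
    ∫⁻ ζ in Metric.ball (0 : ℂ) 1, ENNReal.ofReal ((‖1 - conj ζ * z‖ ^ k)⁻¹)
      ≤ ENNReal.ofReal (π / (1 - ‖z‖) ^ k) := by
  have hδ : 0 < 1 - ‖z‖ := by linarith
  calc ∫⁻ ζ in Metric.ball (0 : ℂ) 1, ENNReal.ofReal ((‖1 - conj ζ * z‖ ^ k)⁻¹)
      ≤ ∫⁻ _ in Metric.ball (0 : ℂ) 1, ENNReal.ofReal (((1 - ‖z‖) ^ k)⁻¹) :=
        setLIntegral_mono' measurableSet_ball fun ζ hζ => ENNReal.ofReal_le_ofReal <|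
          inv_anti₀ (by positivity) <| pow_le_pow_left₀ hδ.le
            (one_sub_norm_le_norm_one_sub_conj_mul (mem_ball_zero_iff.mp hζ).le z) k
    _ = ENNReal.ofReal (π / (1 - ‖z‖) ^ k) := by
        rw [setLIntegral_const, Complex.volume_ball, ENNReal.ofReal_one, one_pow, one_mul,
          ← ENNReal.ofReal_coe_nnreal, NNReal.coe_real_pi, ← ENNReal.ofReal_mul (by positivity),
          div_eq_inv_mul]

theorem setLIntegral_ball_inv_pow_four_norm_one_sub_conj_mul_le {z : ℂ} (hz : ‖z‖ < 1) :
    ∫⁻ ζ in Metric.ball (0 : ℂ) 1, ENNReal.ofReal ((‖1 - conj ζ * z‖ ^ 4)⁻¹)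
      ≤ ENNReal.ofReal (4 * π / (1 - ‖z‖) ^ 2) := by
  have hδ : 0 < 1 - ‖z‖ := by linarith
  rcases lt_or_ge ‖z‖ (1 / 2) with hsmall | hlarge
  · refine (setLIntegral_ball_inv_pow_norm_one_sub_conj_mul_le_pi_div 4 hz).trans
      (ENNReal.ofReal_le_ofReal ?_)
    have h : 1 ≤ 4 * (1 - ‖z‖) ^ 2 := by nlinarith
    rw [div_le_div_iff₀ (by positivity) (by positivity)]
    nlinarith [mul_le_mul_of_nonneg_left h (by positivity : 0 ≤ π * (1 - ‖z‖) ^ 2)]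
  · refine (setLIntegral_ball_comp_conj_mul (fun w => ENNReal.ofReal ((‖1 - w‖ ^ 4)⁻¹)) z).trans_le
      ((setLIntegral_ball_inv_pow_four_norm_one_sub_ofReal_mul_le hlarge hz).trans
        (ENNReal.ofReal_le_ofReal ?_))
    gcongr
    linarith [pi_pos]

theorem setLIntegral_ball_inv_sq_norm_one_sub_conj_mul_le {z : ℂ} (hz : ‖z‖ < 1) :
    ∫⁻ ζ in Metric.ball (0 : ℂ) 1, ENNReal.ofReal ((‖1 - conj ζ * z‖ ^ 2)⁻¹)
      ≤ ENNReal.ofReal (6 * π * Real.log (2 / (1 - ‖z‖))) := by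
  have hδ : 0 < 1 - ‖z‖ := by linarith
  have hlog := log_two_le_log_two_div_one_sub (norm_nonneg z) hz
  rcases lt_or_ge ‖z‖ (1 / 2) with hsmall | hlarge
  · refine (setLIntegral_ball_inv_pow_norm_one_sub_conj_mul_le_pi_div 2 hz).trans
      (ENNReal.ofReal_le_ofReal ?_)
    have : π / (1 - ‖z‖) ^ 2 ≤ 4 * π := by
      have h : 1 ≤ 4 * (1 - ‖z‖) ^ 2 := by nlinarith
      rw [div_le_iff₀ (by positivity)]; nlinarith [pi_pos]
    nlinarith [pi_pos, log_two_gt_d9]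
  · refine (setLIntegral_ball_comp_conj_mul (fun w => ENNReal.ofReal ((‖1 - w‖ ^ 2)⁻¹)) z).trans_le
      ((setLIntegral_ball_inv_sq_norm_one_sub_ofReal_mul_le hlarge hz).trans
        (ENNReal.ofReal_le_ofReal ?_))
    gcongr
    · linarith [log_two_gt_d9]
    · linarith

theorem sq_norm_apply_le_of_norm_sub_le {g : ℂ → ℂ} {L : ℝ} {ζ z : ℂ} (hζ : ‖ζ‖ ≤ 1) (hz : ‖z‖ ≤ 1)
    (hLip : ‖g ζ - g z‖ ≤ L * ‖ζ - z‖) :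
    ‖g ζ‖ ^ 2 ≤ 2 * ‖g z‖ ^ 2 + 2 * L ^ 2 * ‖1 - conj ζ * z‖ ^ 2 := by
  have hdiff : ‖g ζ - g z‖ ^ 2 ≤ L ^ 2 * ‖1 - conj ζ * z‖ ^ 2 := calc
    ‖g ζ - g z‖ ^ 2 ≤ (L * ‖ζ - z‖) ^ 2 := pow_le_pow_left₀ (norm_nonneg _) hLip 2
    _ = L ^ 2 * ‖ζ - z‖ ^ 2 := mul_pow _ _ _
    _ ≤ L ^ 2 * ‖1 - conj ζ * z‖ ^ 2 := by
        gcongr; exact norm_sub_le_norm_one_sub_conj_mul hζ hz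
  have htri : ‖g ζ‖ ≤ ‖g z‖ + ‖g ζ - g z‖ := norm_le_norm_add_norm_sub' _ _
  nlinarith [norm_nonneg (g ζ), norm_nonneg (g ζ - g z), sq_nonneg (‖g z‖ - ‖g ζ - g z‖)]

theorem berezin_integrand_le {g : ℂ → ℂ} {L : ℝ} {ζ z : ℂ} (hζ : ‖ζ‖ ≤ 1) (hz : ‖z‖ < 1)
    (hLip : ‖g ζ - g z‖ ≤ L * ‖ζ - z‖) :
    ‖g ζ‖ ^ 2 * ((1 - ‖z‖ ^ 2) ^ 2 / ‖1 - conj ζ * z‖ ^ 4)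
      ≤ 2 * ‖g z‖ ^ 2 * (1 - ‖z‖ ^ 2) ^ 2 * (‖1 - conj ζ * z‖ ^ 4)⁻¹
        + 2 * L ^ 2 * (1 - ‖z‖ ^ 2) ^ 2 * (‖1 - conj ζ * z‖ ^ 2)⁻¹ := by
  have hD : 0 < ‖1 - conj ζ * z‖ :=
    (sub_pos.2 hz).trans_le (one_sub_norm_le_norm_one_sub_conj_mul hζ z)
  calc ‖g ζ‖ ^ 2 * ((1 - ‖z‖ ^ 2) ^ 2 / ‖1 - conj ζ * z‖ ^ 4)
      ≤ (2 * ‖g z‖ ^ 2 + 2 * L ^ 2 * ‖1 - conj ζ * z‖ ^ 2)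
          * ((1 - ‖z‖ ^ 2) ^ 2 / ‖1 - conj ζ * z‖ ^ 4) := by
        gcongr
        exact sq_norm_apply_le_of_norm_sub_le hζ hz.le hLip
    _ = _ := by field_simp

theorem setLIntegral_berezin_sq_norm_le {g : ℂ → ℂ} {L : ℝ} {z : ℂ} (hz : ‖z‖ < 1)
    (hLip : ∀ ζ ∈ Metric.ball (0 : ℂ) 1, ‖g ζ - g z‖ ≤ L * ‖ζ - z‖) :
    ∫⁻ ζ in Metric.ball (0 : ℂ) 1,
        ENNReal.ofReal (‖g ζ‖ ^ 2 * ((1 - ‖z‖ ^ 2) ^ 2 / ‖1 - conj ζ * z‖ ^ 4))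
      ≤ ENNReal.ofReal (4 * π * (8 + 3 * L ^ 2) *
          (‖g z‖ ^ 2 + (1 - ‖z‖ ^ 2) ^ 2 * Real.log (2 / (1 - ‖z‖)))) := by
  set w := (1 - ‖z‖ ^ 2) ^ 2 with hw
  set D : ℂ → ℝ := fun ζ => ‖1 - conj ζ * z‖
  have hlog : 0 ≤ Real.log (2 / (1 - ‖z‖)) :=
    (log_nonneg one_le_two).trans (log_two_le_log_two_div_one_sub (norm_nonneg z) hz)
  have hmeas : ∀ k : ℕ, Measurable fun ζ => ENNReal.ofReal ((D ζ ^ k)⁻¹) := fun k => by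
    fun_prop
  calc ∫⁻ ζ in Metric.ball (0 : ℂ) 1, ENNReal.ofReal (‖g ζ‖ ^ 2 * (w / D ζ ^ 4))
      ≤ ∫⁻ ζ in Metric.ball (0 : ℂ) 1,
          (ENNReal.ofReal (2 * ‖g z‖ ^ 2 * w) * ENNReal.ofReal ((D ζ ^ 4)⁻¹)
            + ENNReal.ofReal (2 * L ^ 2 * w) * ENNReal.ofReal ((D ζ ^ 2)⁻¹)) :=
        setLIntegral_mono' measurableSet_ball fun ζ hζ => by
          rw [← ENNReal.ofReal_mul (by positivity), ← ENNReal.ofReal_mul (by positivity),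
            ← ENNReal.ofReal_add (by positivity) (by positivity)]
          exact ENNReal.ofReal_le_ofReal
            (berezin_integrand_le (mem_ball_zero_iff.mp hζ).le hz (hLip ζ hζ))
    _ = ENNReal.ofReal (2 * ‖g z‖ ^ 2 * w)
            * (∫⁻ ζ in Metric.ball (0 : ℂ) 1, ENNReal.ofReal ((D ζ ^ 4)⁻¹))
          + ENNReal.ofReal (2 * L ^ 2 * w)
            * (∫⁻ ζ in Metric.ball (0 : ℂ) 1, ENNReal.ofReal ((D ζ ^ 2)⁻¹)) := by
        rw [lintegral_add_left ((hmeas 4).const_mul _), lintegral_const_mul _ (hmeas 4),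
          lintegral_const_mul _ (hmeas 2)]
    _ ≤ ENNReal.ofReal (2 * ‖g z‖ ^ 2 * w) * ENNReal.ofReal (4 * π / (1 - ‖z‖) ^ 2)
          + ENNReal.ofReal (2 * L ^ 2 * w)
            * ENNReal.ofReal (6 * π * Real.log (2 / (1 - ‖z‖))) := by
        gcongr
        · exact setLIntegral_ball_inv_pow_four_norm_one_sub_conj_mul_le hz
        · exact setLIntegral_ball_inv_sq_norm_one_sub_conj_mul_le hz
    _ ≤ _ := by
        rw [← ENNReal.ofReal_mul (by positivity), ← ENNReal.ofReal_mul (by positivity),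
          ← ENNReal.ofReal_add (by positivity) (by positivity)]
        refine ENNReal.ofReal_le_ofReal ?_
        have hw4 : w / (1 - ‖z‖) ^ 2 ≤ 4 := by
          rw [hw, show (1 - ‖z‖ ^ 2) ^ 2 = (1 - ‖z‖) ^ 2 * (1 + ‖z‖) ^ 2 by ring,
            mul_div_cancel_left₀ _ (pow_pos (sub_pos.2 hz) 2).ne']
          nlinarith [norm_nonneg z]
        have hrest : 0 ≤ 12 * π * L ^ 2 * ‖g z‖ ^ 2
            + 32 * π * (w * Real.log (2 / (1 - ‖z‖))) := by
          positivity
        calc 2 * ‖g z‖ ^ 2 * w * (4 * π / (1 - ‖z‖) ^ 2)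
              + 2 * L ^ 2 * w * (6 * π * Real.log (2 / (1 - ‖z‖)))
            = 8 * π * ‖g z‖ ^ 2 * (w / (1 - ‖z‖) ^ 2)
              + 12 * π * L ^ 2 * (w * Real.log (2 / (1 - ‖z‖))) := by ring
          _ ≤ 8 * π * ‖g z‖ ^ 2 * 4 + 12 * π * L ^ 2 * (w * Real.log (2 / (1 - ‖z‖))) := by
              gcongr
          _ ≤ 4 * π * (8 + 3 * L ^ 2) * (‖g z‖ ^ 2 + w * Real.log (2 / (1 - ‖z‖))) := by
              linarith

theorem berezin_lipschitz_bound_general (g : ℂ → ℂ) (L : ℝ)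
    (hLip : ∀ z ∈ Metric.ball (0 : ℂ) 1, ∀ w ∈ Metric.ball (0 : ℂ) 1,
      ‖g z - g w‖ ≤ L * ‖z - w‖) :
    ∃ C : ℝ, ∀ z ∈ Metric.ball (0 : ℂ) 1,
      (∫ ζ in Metric.ball (0 : ℂ) 1,
          (‖g ζ‖) ^ 2 * ((1 - (‖z‖) ^ 2) ^ 2 /
            (‖1 - (starRingEnd ℂ) ζ * z‖) ^ 4)) ≤
        C * ((‖g z‖) ^ 2 +
          (1 - (‖z‖) ^ 2) ^ 2 * Real.log (2 / (1 - ‖z‖))) := by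
  refine ⟨4 * π * (8 + 3 * L ^ 2), fun z hz => ?_⟩
  have hz1 : ‖z‖ < 1 := mem_ball_zero_iff.mp hz
  have hlog : 0 ≤ Real.log (2 / (1 - ‖z‖)) :=
    (log_nonneg one_le_two).trans (log_two_le_log_two_div_one_sub (norm_nonneg z) hz1)
  exact (integral_le_toReal_lintegral_ofReal fun ζ => by positivity).trans
    (ENNReal.toReal_le_of_le_ofReal (by positivity)
      (setLIntegral_berezin_sq_norm_le hz1 fun ζ hζ => hLip ζ hζ z hz))

/-- For a Lipschitz analytic function `g` on the unit disc, the Berezin transform of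
`|g|²` satisfies `B(|g|²)(z) ≤ C (|g(z)|² + (1-|z|²)² log(2/(1-|z|)))`. -/
theorem berezin_lipschitz_bound (g : ℂ → ℂ) (L : ℝ)
    (hg : DifferentiableOn ℂ g (Metric.ball (0 : ℂ) 1))
    (hLip : ∀ z ∈ Metric.ball (0 : ℂ) 1, ∀ w ∈ Metric.ball (0 : ℂ) 1,
      ‖g z - g w‖ ≤ L * ‖z - w‖) :
    ∃ C : ℝ, ∀ z ∈ Metric.ball (0 : ℂ) 1,
      (∫ ζ in Metric.ball (0 : ℂ) 1,
          (‖g ζ‖) ^ 2 * ((1 - (‖z‖) ^ 2) ^ 2 /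
            (‖1 - (starRingEnd ℂ) ζ * z‖) ^ 4)) ≤
        C * ((‖g z‖) ^ 2 +
          (1 - (‖z‖) ^ 2) ^ 2 * Real.log (2 / (1 - ‖z‖))) :=
  berezin_lipschitz_bound_general g L hLip
end
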